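/- arXiv:math/0605532 — 4 statements merged into one kernel-verified Lean document; each statement's English description precedes it below -/
import Mathlib

section
/- Let 0 < p < 1 and for |ζ| < 1 define H(ζ) = (1 − (1−p)ζ)^p (1 + pζ)^{1−p} − 1, using principal branches of the complex powers. Then |H(ζ)| ≤ (p(1−p)/2) · |ζ|²/(1 − |ζ|) for all ζ with |ζ| < 1. -/
/-!
Differentiating, `H'(w) = -p(1-p) w (1-(1-p)w)^(p-1) (1+pw)^(-p)`. Both bases have modulus at
least `1 - |w|` and both exponents are nonpositive, so `|H'(w)| ≤ p(1-p)|w| / (1-|w|)`.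
Integrating this linear-in-`|w|` bound along the segment from `0` to `ζ`, where `H(0) = 0`,
gives the estimate; the factor `1/2` is `∫₀¹ t dt`.
-/

open Complex Set Metric

noncomputable section

theorem norm_sub_le_of_norm_deriv_le_mul_norm {E : Type*} [NormedAddCommGroup E]
    [NormedSpace ℂ E] {f f' : ℂ → E} {z : ℂ} {K : ℝ}
    (hf : ∀ w ∈ segment ℝ 0 z, HasDerivAt f (f' w) w)
    (bound : ∀ w ∈ segment ℝ 0 z, ‖f' w‖ ≤ K * ‖w‖) :
    ‖f z - f 0‖ ≤ K / 2 * ‖z‖ ^ 2 := by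
  have hseg (t : ℝ) (ht : t ∈ Icc 0 1) : (t : ℂ) * z ∈ segment ℝ 0 z := by
    rw [segment_eq_image]
    exact ⟨t, ht, by simp [Complex.real_smul]⟩
  have hg (t : ℝ) (ht : t ∈ Icc 0 1) :
      HasDerivAt (fun s : ℝ => f (s * z) - f 0) (z • f' (t * z)) t := by
    have hline := (hasDerivAt_id (t : ℂ)).comp_ofReal.mul_const z
    simpa using ((hf _ (hseg t ht)).scomp t hline).sub_const (f 0)
  have hB (t : ℝ) : HasDerivAt (fun t => K / 2 * ‖z‖ ^ 2 * t ^ 2) (K * ‖z‖ ^ 2 * t) t :=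
    ((hasDerivAt_pow 2 t).const_mul (K / 2 * ‖z‖ ^ 2)).congr_deriv (by norm_num; ring)
  have hg_bound (t : ℝ) (ht : t ∈ Ico 0 1) : ‖z • f' (t * z)‖ ≤ K * ‖z‖ ^ 2 * t :=
    calc ‖z • f' (t * z)‖ ≤ ‖z‖ * (K * ‖(t : ℂ) * z‖) := by
          rw [norm_smul]
          exact mul_le_mul_of_nonneg_left (bound _ (hseg t (Ico_subset_Icc_self ht)))
            (norm_nonneg z)
      _ = K * ‖z‖ ^ 2 * t := by rw [norm_mul, norm_real, Real.norm_of_nonneg ht.1]; ring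
  simpa using image_norm_le_of_norm_deriv_right_le_deriv_boundary
    (fun t ht => (hg t ht).continuousAt.continuousWithinAt)
    (fun t ht => (hg t (Ico_subset_Icc_self ht)).hasDerivWithinAt) (by simp) hB hg_bound
    (right_mem_Icc.2 zero_le_one)

theorem norm_ofReal_mul_le {c : ℝ} (hc : |c| ≤ 1) (w : ℂ) : ‖(c : ℂ) * w‖ ≤ ‖w‖ := by
  rw [norm_mul, norm_real, Real.norm_eq_abs]
  exact mul_le_of_le_one_left (norm_nonneg w) hc

theorem one_add_ofReal_mul_mem_slitPlane {c : ℝ} (hc : |c| ≤ 1) {w : ℂ} (hw : ‖w‖ < 1) :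
    1 + (c : ℂ) * w ∈ slitPlane :=
  mem_slitPlane_of_norm_lt_one ((norm_ofReal_mul_le hc w).trans_lt hw)

theorem one_sub_norm_le_norm_one_add_ofReal_mul {c : ℝ} (hc : |c| ≤ 1) (w : ℂ) :
    1 - ‖w‖ ≤ ‖1 + (c : ℂ) * w‖ :=
  calc 1 - ‖w‖ ≤ ‖(1 : ℂ)‖ - ‖(c : ℂ) * w‖ := by
        rw [norm_one]; linarith [norm_ofReal_mul_le hc w]
    _ ≤ ‖1 + (c : ℂ) * w‖ := norm_sub_le_norm_add _ _

theorem norm_one_add_ofReal_mul_cpow_le {c s : ℝ} (hc : |c| ≤ 1) (hs : s ≤ 0) {w : ℂ}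
    (hw : ‖w‖ < 1) : ‖(1 + (c : ℂ) * w) ^ (s : ℂ)‖ ≤ (1 - ‖w‖) ^ s := by
  rw [norm_cpow_real]
  exact Real.rpow_le_rpow_of_nonpos (by linarith)
    (one_sub_norm_le_norm_one_add_ofReal_mul hc w) hs

def H (p : ℝ) (ζ : ℂ) : ℂ :=
  (1 - (1 - (p : ℂ)) * ζ) ^ (p : ℂ) * (1 + (p : ℂ) * ζ) ^ (1 - (p : ℂ)) - 1

theorem one_sub_one_sub_mul_eq (p : ℝ) (w : ℂ) :
    1 - (1 - (p : ℂ)) * w = 1 + ((p - 1 : ℝ) : ℂ) * w := by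
  push_cast; ring

def H' (p : ℝ) (w : ℂ) : ℂ :=
  -((p * (1 - p) : ℝ) : ℂ) * w * (1 - (1 - (p : ℂ)) * w) ^ ((p : ℂ) - 1)
    * (1 + (p : ℂ) * w) ^ (-(p : ℂ))

theorem hasDerivAt_H (p : ℝ) {w : ℂ} (hA : 1 - (1 - (p : ℂ)) * w ∈ slitPlane)
    (hB : 1 + (p : ℂ) * w ∈ slitPlane) : HasDerivAt (H p) (H' p w) w := by
  set A := 1 - (1 - (p : ℂ)) * w
  set B := 1 + (p : ℂ) * w
  have dA : HasDerivAt (fun z : ℂ => (1 - (1 - (p : ℂ)) * z) ^ (p : ℂ))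
      (p * A ^ ((p : ℂ) - 1) * (-(1 - (p : ℂ)))) w := by
    simpa using ((hasDerivAt_id w).const_mul (1 - (p : ℂ))).const_sub 1 |>.cpow_const hA
  have dB : HasDerivAt (fun z : ℂ => (1 + (p : ℂ) * z) ^ (1 - (p : ℂ)))
      ((1 - p) * B ^ (-(p : ℂ)) * p) w := by
    simpa using ((hasDerivAt_id w).const_mul (p : ℂ)).const_add 1 |>.cpow_const
      (c := 1 - (p : ℂ)) hB
  refine ((dA.mul dB).sub_const 1).congr_deriv ?_
  have eA : A ^ (p : ℂ) = A ^ ((p : ℂ) - 1) * A := by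
    simpa using cpow_add ((p : ℂ) - 1) 1 (slitPlane_ne_zero hA)
  have eB : B ^ (1 - (p : ℂ)) = B ^ (-(p : ℂ)) * B := by
    simpa [neg_add_eq_sub] using cpow_add (-(p : ℂ)) 1 (slitPlane_ne_zero hB)
  rw [H', eA, eB]
  push_cast
  ring

theorem norm_H'_le {p : ℝ} (hp0 : 0 ≤ p) (hp1 : p ≤ 1) {w : ℂ} (hw : ‖w‖ < 1) :
    ‖H' p w‖ ≤ p * (1 - p) / (1 - ‖w‖) * ‖w‖ := by
  have hr : 0 < 1 - ‖w‖ := by linarith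
  have hc : |p - 1| ≤ 1 := abs_le.2 ⟨by linarith, by linarith⟩
  have hpp : |p| ≤ 1 := abs_le.2 ⟨by linarith, hp1⟩
  have hA := norm_one_add_ofReal_mul_cpow_le hc (s := p - 1) (by linarith) hw
  have hB := norm_one_add_ofReal_mul_cpow_le hpp (s := -p) (by linarith) hw
  rw [← one_sub_one_sub_mul_eq] at hA
  push_cast at hA hB
  calc ‖H' p w‖ = p * (1 - p) * ‖w‖ * ‖(1 - (1 - (p : ℂ)) * w) ^ ((p : ℂ) - 1)‖
        * ‖(1 + (p : ℂ) * w) ^ (-(p : ℂ))‖ := by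
        rw [H', norm_mul, norm_mul, norm_mul, norm_neg, norm_real,
          Real.norm_of_nonneg (mul_nonneg hp0 (by linarith))]
    _ ≤ p * (1 - p) * ‖w‖ * (1 - ‖w‖) ^ (p - 1) * (1 - ‖w‖) ^ (-p) := by
        have : 0 ≤ p * (1 - p) * ‖w‖ := mul_nonneg (mul_nonneg hp0 (by linarith)) (norm_nonneg w)
        gcongr
    _ = p * (1 - p) / (1 - ‖w‖) * ‖w‖ := by
        rw [mul_assoc _ ((1 - ‖w‖) ^ (p - 1)), ← Real.rpow_add hr,
          show p - 1 + -p = -1 by ring, Real.rpow_neg_one]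
        ring

/-- For `0 < p < 1` and `|ζ| < 1`, the function
`H(ζ) = (1 − (1−p)ζ)^p (1 + pζ)^{1−p} − 1` (principal branches) satisfies
`|H(ζ)| ≤ (p(1−p)/2)·|ζ|²/(1−|ζ|)`. -/
theorem H_estimate (p : ℝ) (hp0 : 0 < p) (hp1 : p < 1) (ζ : ℂ) (hζ : ‖ζ‖ < 1) :
    ‖(1 - (1 - (p : ℂ)) * ζ) ^ (p : ℂ) * (1 + (p : ℂ) * ζ) ^ (1 - (p : ℂ)) - 1‖
      ≤ p * (1 - p) / 2 * ‖ζ‖ ^ 2 / (1 - ‖ζ‖) := by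
  have hc : |p - 1| ≤ 1 := abs_le.2 ⟨by linarith, by linarith⟩
  have hpp : |p| ≤ 1 := abs_le.2 ⟨by linarith, hp1.le⟩
  have hderiv (w : ℂ) (hw : ‖w‖ < 1) : HasDerivAt (H p) (H' p w) w := by
    refine hasDerivAt_H p ?_ (one_add_ofReal_mul_mem_slitPlane hpp hw)
    rw [one_sub_one_sub_mul_eq]
    exact one_add_ofReal_mul_mem_slitPlane hc hw
  have hseg (w : ℂ) (hw : w ∈ segment ℝ 0 ζ) : ‖w‖ ≤ ‖ζ‖ := by
    simpa using segment_subset_closedBall_left 0 ζ hw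
  have hbound (w : ℂ) (hw : w ∈ segment ℝ 0 ζ) :
      ‖H' p w‖ ≤ p * (1 - p) / (1 - ‖ζ‖) * ‖w‖ := by
    refine (norm_H'_le hp0.le hp1.le ((hseg w hw).trans_lt hζ)).trans ?_
    have : 0 ≤ 1 - p := by linarith
    gcongr
    exact hseg w hw
  have key := norm_sub_le_of_norm_deriv_le_mul_norm
    (fun w hw => hderiv w ((hseg w hw).trans_lt hζ)) hbound
  have H_zero : H p 0 = 0 := by simp [H]
  rw [H_zero, sub_zero] at key
  show ‖H p ζ‖ ≤ _
  exact key.trans_eq (by ring)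
end
end

section
/- Let 0 < p < 1, let f(z) = (z−p)^p (z+1−p)^{1−p} with principal branches of the powers (holomorphic on ℂ ∖ (−∞,p]), let w ∈ ℂ with |w| ≥ (1+√5)/2, set F(z) = (f(z)−w)/w, and let H(ζ) = (1−(1−p)ζ)^p (1+pζ)^{1−p} − 1 with principal branches. Suppose z ∈ ℂ ∖ (−∞,p] satisfies |F(z)| ≤ p(1−p)/2. Then |z|² ≥ p(1−p); moreover, if the Newton iterate z̃ = z − F(z)/F′(z) also lies in ℂ ∖ (−∞,p], then F(z̃) = H(F(z)/z) and |F(z̃)| ≤ (2/3)|F(z)|² < p(1−p)/2. -/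
open Complex Set Metric

noncomputable section

/-- The slit map `f(z) = (z−p)^p (z+1−p)^{1−p}`, with principal branches of the powers. -/
def slitf (p : ℝ) (z : ℂ) : ℂ := (z - (p : ℂ)) ^ (p : ℂ) * (z + 1 - (p : ℂ)) ^ (1 - (p : ℂ))

/-- The slit `(−∞, p]` on the real axis, as a subset of `ℂ`. -/
def slitSet (p : ℝ) : Set ℂ := {z : ℂ | z.im = 0 ∧ z.re ≤ p}

/-- The auxiliary function `H(ζ) = (1 − (1−p)ζ)^p (1 + pζ)^{1−p} − 1` (principal branches). -/
def Hfun (p : ℝ) (ζ : ℂ) : ℂ :=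
  (1 - (1 - (p : ℂ)) * ζ) ^ (p : ℂ) * (1 + (p : ℂ) * ζ) ^ (1 - (p : ℂ)) - 1

/-!
Write `A = z - p`, `B = z + 1 - p` and `ζ = F z / z`. Since `f'/f = p/A + (1-p)/B = z/(AB)`,
the Newton iterate satisfies `z̃ - p = A·r·(1 - (1-p)ζ)` and `z̃ + 1 - p = B·r·(1 + pζ)` with
`r = w / f z`. The principal powers then factor as
`f z̃ = w·(1 - (1-p)ζ)^p·(1 + pζ)^(1-p)`, i.e. `F z̃ = H ζ`, provided no argument wraps around:
`arg A - arg B` and `arg Ã - arg B̃` lie in `(-π, π)` because each pair has a common imaginary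
part, `|f z| > 1` makes the angle between `A` and `B` acute, and the two factors of `H` are close
to `1`.

For the estimates, `|w|(1 - |F z|) ≤ |f z| ≤ |z| + 1 - 2p(1-p)` (weighted AM-GM) bounds `|z|`
from below, and `log (1 + u) = u + O(|u|²)` gives `|H ζ| ≤ p(1-p)|ζ|²` for `|ζ| ≤ 1/4`.
-/

open Real ComplexConjugate

namespace Complex

theorem abs_arg_sub_arg_lt_pi_of_im_eq {x y : ℂ} (hx : x ∈ slitPlane) (hy : y ∈ slitPlane)
    (h : x.im = y.im) : |arg x - arg y| < π := by
  have hxπ : arg x < π := (arg_le_pi x).lt_of_ne (mem_slitPlane_iff_arg.1 hx).1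
  have hyπ : arg y < π := (arg_le_pi y).lt_of_ne (mem_slitPlane_iff_arg.1 hy).1
  have := neg_pi_lt_arg x
  have := neg_pi_lt_arg y
  rw [abs_lt]
  rcases le_or_gt 0 x.im with h0 | h0
  · have := arg_nonneg_iff.2 h0
    have := arg_nonneg_iff.2 (h ▸ h0)
    constructor <;> linarith
  · have := arg_neg_iff.2 h0
    have := arg_neg_iff.2 (h ▸ h0)
    constructor <;> linarith

theorem abs_arg_sub_arg_lt_pi_div_two_of_re_mul_conj_pos {x y : ℂ} (h : |arg x - arg y| < π)
    (hpos : 0 < (x * conj y).re) : |arg x - arg y| < π / 2 := by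
  have hcos : (x * conj y).re = ‖x‖ * ‖y‖ * Real.cos (arg x - arg y) := by
    rw [Real.cos_sub, mul_re, conj_re, conj_im, ← norm_mul_cos_arg x, ← norm_mul_cos_arg y,
      ← norm_mul_sin_arg x, ← norm_mul_sin_arg y]
    ring
  by_contra! hle
  have : Real.cos (arg x - arg y) ≤ 0 := by
    rw [← Real.cos_abs]
    exact Real.cos_nonpos_of_pi_div_two_le_of_le hle (by linarith)
  have : ‖x‖ * ‖y‖ * Real.cos (arg x - arg y) ≤ 0 :=
    mul_nonpos_of_nonneg_of_nonpos (by positivity) this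
  linarith

/-- Each principal power is multiplicative up to a factor `exp (2πi n q)`; the bound on the
arguments forces the two winding numbers `n` to agree, so the factors cancel between the
exponents `q` and `1 - q`. -/
theorem cpow_mul_cpow_one_sub_of_abs_arg_lt {a b c d r : ℂ} (q : ℂ) (ha : a ≠ 0) (hb : b ≠ 0)
    (hc : c ≠ 0) (hd : d ≠ 0) (hr : r ≠ 0)
    (harg : |arg (a * (r * c)) - arg (b * (r * d)) - (arg a - arg b) - (arg c - arg d)| < 2 * π) :
    (a * (r * c)) ^ q * (b * (r * d)) ^ (1 - q)
      = a ^ q * b ^ (1 - q) * r * (c ^ q * d ^ (1 - q)) := by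
  have hac : a * (r * c) ≠ 0 := mul_ne_zero ha (mul_ne_zero hr hc)
  have hbd : b * (r * d) ≠ 0 := mul_ne_zero hb (mul_ne_zero hr hd)
  obtain ⟨u, hu⟩ : ∃ u, u = log (a * (r * c)) - log a - log c := ⟨_, rfl⟩
  obtain ⟨v, hv⟩ : ∃ v, v = log (b * (r * d)) - log b - log d := ⟨_, rfl⟩
  have hexpu : exp u = r := by
    rw [hu, exp_sub, exp_sub, exp_log hac, exp_log ha, exp_log hc]
    field_simp
  have hexpv : exp v = r := by
    rw [hv, exp_sub, exp_sub, exp_log hbd, exp_log hb, exp_log hd]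
    field_simp
  obtain ⟨n, hn⟩ := exp_eq_exp_iff_exists_int.1 (hexpu.trans hexpv.symm)
  have hn0 : n = 0 := by
    have him : arg (a * (r * c)) - arg (b * (r * d)) - (arg a - arg b) - (arg c - arg d)
        = n * (2 * π) := by
      have := congrArg im hn
      simp only [hu, hv, sub_im, add_im, mul_im, log_im, intCast_re, intCast_im, mul_re,
        re_ofNat, im_ofNat, ofReal_re, ofReal_im, I_re, I_im, mul_zero, mul_one, zero_mul,
        sub_zero, add_zero, sub_self] at this
      linarith
    rw [him, abs_mul, abs_of_pos (by positivity : (0:ℝ) < 2 * π)] at harg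
    have : |(n : ℝ)| < 1 := by nlinarith [pi_pos]
    exact Int.abs_lt_one_iff.1 (by exact_mod_cast this)
  have hvu : v = u := by simpa [hn0] using hn.symm
  have hlog : log (a * (r * c)) * q + log (b * (r * d)) * (1 - q)
      = (log a * q + log b * (1 - q)) + u + (log c * q + log d * (1 - q)) := by
    linear_combination (-q) * hu - (1 - q) * (hvu.symm.trans hv)
  rw [cpow_def_of_ne_zero hac, cpow_def_of_ne_zero hbd, cpow_def_of_ne_zero ha,
    cpow_def_of_ne_zero hb, cpow_def_of_ne_zero hc, cpow_def_of_ne_zero hd, ← exp_add, hlog,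
    exp_add, exp_add, exp_add, exp_add, hexpu]

theorem re_one_add_pos {u : ℂ} (hu : ‖u‖ < 1) : 0 < (1 + u).re := by
  have := neg_abs_le u.re
  have := abs_re_le_norm u
  simp only [add_re, one_re]
  linarith

theorem norm_one_sub_ofReal {p : ℝ} (hp1 : p ≤ 1) : ‖(1 - p : ℂ)‖ = 1 - p := by
  rw [← ofReal_one, ← ofReal_sub, Complex.norm_of_nonneg (sub_nonneg.2 hp1)]

end Complex

theorem slitPlane_of_notMem_slitSet {p : ℝ} {z : ℂ} (hz : z ∉ slitSet p) :
    z - p ∈ slitPlane ∧ z + 1 - p ∈ slitPlane := by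
  simp only [mem_slitPlane_iff, sub_re, add_re, one_re, ofReal_re, sub_im, add_im, one_im,
    ofReal_im, sub_zero, add_zero]
  by_cases him : z.im = 0
  · have : p < z.re := not_le.1 fun h => hz ⟨him, h⟩
    constructor <;> left <;> linarith
  · exact ⟨Or.inr him, Or.inr him⟩

theorem hasDerivAt_slitf {p : ℝ} {z : ℂ} (hz : z ∉ slitSet p) :
    HasDerivAt (slitf p) (slitf p z * z / ((z - p) * (z + 1 - p))) z := by
  obtain ⟨hA, hB⟩ := slitPlane_of_notMem_slitSet hz
  have hA0 := slitPlane_ne_zero hA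
  have hB0 := slitPlane_ne_zero hB
  refine ((((hasDerivAt_id z).sub_const (p : ℂ)).cpow_const (c := p) hA).mul
    ((((hasDerivAt_id z).add_const 1).sub_const (p : ℂ)).cpow_const (c := 1 - p) hB)).congr_deriv ?_
  have hA' : (z - p) ^ ((p : ℂ) - 1) * (z - p) = (z - p) ^ (p : ℂ) := by
    rw [cpow_sub _ _ hA0, cpow_one, div_mul_cancel₀ _ hA0]
  have hB' : (z + 1 - p) ^ (1 - (p : ℂ) - 1) * (z + 1 - p) = (z + 1 - p) ^ (1 - (p : ℂ)) := by
    rw [cpow_sub _ _ hB0, cpow_one, div_mul_cancel₀ _ hB0]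
  rw [slitf, eq_div_iff (mul_ne_zero hA0 hB0)]
  simp only [id, mul_one]
  linear_combination (p * (z + 1 - p) ^ (1 - (p : ℂ)) * (z + 1 - p)) * hA'
    + ((1 - p) * (z - p) ^ (p : ℂ) * (z - p)) * hB'

theorem norm_slitf (p : ℝ) (z : ℂ) : ‖slitf p z‖ = ‖z - p‖ ^ p * ‖z + 1 - p‖ ^ (1 - p) := by
  rw [slitf, norm_mul, norm_cpow_real, show (1 : ℂ) - p = ((1 - p : ℝ) : ℂ) by push_cast; ring,
    norm_cpow_real]

theorem norm_slitf_le {p : ℝ} (hp0 : 0 ≤ p) (hp1 : p ≤ 1) (z : ℂ) :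
    ‖slitf p z‖ ≤ ‖z‖ + 1 - 2 * (p * (1 - p)) := by
  have hA : ‖z - p‖ ≤ ‖z‖ + p := (norm_sub_le _ _).trans (by simp [abs_of_nonneg hp0])
  have hB : ‖z + 1 - p‖ ≤ ‖z‖ + (1 - p) := by
    rw [show z + 1 - p = z + ((1 - p : ℝ) : ℂ) by push_cast; ring]
    exact (norm_add_le _ _).trans (by rw [norm_real, Real.norm_of_nonneg (sub_nonneg.2 hp1)])
  rw [norm_slitf]
  calc _ ≤ p * ‖z - p‖ + (1 - p) * ‖z + 1 - p‖ :=
        geom_mean_le_arith_mean2_weighted hp0 (sub_nonneg.2 hp1) (norm_nonneg _) (norm_nonneg _)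
          (by ring)
    _ ≤ p * (‖z‖ + p) + (1 - p) * (‖z‖ + (1 - p)) := by gcongr
    _ = _ := by ring

theorem re_mul_conj_pos_of_one_lt_norm_slitf {p : ℝ} (hp0 : 0 ≤ p) (hp1 : p ≤ 1) {z : ℂ}
    (h : 1 < ‖slitf p z‖) : 0 < ((z - p) * conj (z + 1 - p)).re := by
  obtain ⟨x, rfl⟩ : ∃ x : ℂ, z = x + p := ⟨z - p, by ring⟩
  rw [norm_slitf, add_sub_cancel_right, add_right_comm, add_sub_cancel_right] at h
  rw [add_sub_cancel_right, add_right_comm, add_sub_cancel_right]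
  -- An obtuse angle at `0` in the triangle `0, x, x + 1` makes both sides at most the third, `1`.
  by_contra! hle
  simp only [mul_re, conj_re, conj_im, add_re, add_im, one_re, one_im] at hle
  have hx : ‖x‖ ≤ 1 := by
    rw [← sq_le_one_iff₀ (norm_nonneg _), Complex.sq_norm, normSq_apply]
    nlinarith
  have hx1 : ‖x + 1‖ ≤ 1 := by
    rw [← sq_le_one_iff₀ (norm_nonneg _), Complex.sq_norm, normSq_apply]
    simp only [add_re, add_im, one_re, one_im]
    nlinarith
  have := mul_le_one₀ (rpow_le_one (norm_nonneg _) hx hp0) (by positivity)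
    (rpow_le_one (norm_nonneg _) hx1 (sub_nonneg.2 hp1))
  linarith

section HfunFactors

variable {p : ℝ} {ζ : ℂ}

theorem Hfun_factors_re_pos (hp0 : 0 ≤ p) (hp1 : p ≤ 1) (hζ : ‖ζ‖ < 1) :
    0 < (1 - (1 - p) * ζ).re ∧ 0 < (1 + p * ζ).re := by
  have hu : ‖(1 - p : ℂ) * ζ‖ = (1 - p) * ‖ζ‖ := by rw [norm_mul, norm_one_sub_ofReal hp1]
  have hv : ‖(p : ℂ) * ζ‖ = p * ‖ζ‖ := by rw [norm_mul, Complex.norm_of_nonneg hp0]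
  rw [sub_eq_add_neg]
  constructor <;> apply re_one_add_pos
  · rw [norm_neg, hu]; nlinarith [norm_nonneg ζ]
  · rw [hv]; nlinarith [norm_nonneg ζ]

theorem norm_weighted_log_Hfun_factors_le (hp0 : 0 ≤ p) (hp1 : p ≤ 1) (hζ : ‖ζ‖ < 1) :
    ‖p * log (1 - (1 - p) * ζ) + (1 - p) * log (1 + p * ζ)‖
      ≤ p * (1 - p) * ‖ζ‖ ^ 2 * (1 - ‖ζ‖)⁻¹ / 2 := by
  have hu : ‖(1 - p : ℂ) * ζ‖ = (1 - p) * ‖ζ‖ := by rw [norm_mul, norm_one_sub_ofReal hp1]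
  have hv : ‖(p : ℂ) * ζ‖ = p * ‖ζ‖ := by rw [norm_mul, Complex.norm_of_nonneg hp0]
  have hu1 : ‖-((1 - p : ℂ) * ζ)‖ < 1 := by rw [norm_neg, hu]; nlinarith [norm_nonneg ζ]
  have hv1 : ‖(p : ℂ) * ζ‖ < 1 := by rw [hv]; nlinarith [norm_nonneg ζ]
  -- The linear terms of `log (1 + u) = u + O(u²)` cancel: `p · (-(1 - p) ζ) + (1 - p) · p ζ = 0`.
  have hsplit : p * log (1 - (1 - p) * ζ) + (1 - p) * log (1 + p * ζ)
      = p * (log (1 + -((1 - p : ℂ) * ζ)) - -((1 - p : ℂ) * ζ))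
        + (1 - p) * (log (1 + p * ζ) - p * ζ) := by
    rw [← sub_eq_add_neg]; ring
  rw [hsplit]
  calc _ ≤ p * (‖-((1 - p : ℂ) * ζ)‖ ^ 2 * (1 - ‖-((1 - p : ℂ) * ζ)‖)⁻¹ / 2)
        + (1 - p) * (‖(p : ℂ) * ζ‖ ^ 2 * (1 - ‖(p : ℂ) * ζ‖)⁻¹ / 2) := by
        refine norm_add_le_of_le ?_ ?_
        · rw [norm_mul, Complex.norm_of_nonneg hp0]
          exact mul_le_mul_of_nonneg_left (norm_log_one_add_sub_self_le hu1) hp0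
        · rw [norm_mul, norm_one_sub_ofReal hp1]
          exact mul_le_mul_of_nonneg_left (norm_log_one_add_sub_self_le hv1) (sub_nonneg.2 hp1)
    _ ≤ p * (((1 - p) * ‖ζ‖) ^ 2 * (1 - ‖ζ‖)⁻¹ / 2)
          + (1 - p) * ((p * ‖ζ‖) ^ 2 * (1 - ‖ζ‖)⁻¹ / 2) := by
        rw [norm_neg, hu, hv]
        have := sub_nonneg.2 hp1
        gcongr <;> nlinarith [norm_nonneg ζ]
    _ = _ := by ring

theorem abs_arg_sub_arg_Hfun_factors_lt (hp0 : 0 ≤ p) (hp1 : p ≤ 1) (hζ : ‖ζ‖ ≤ 1 / 4) :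
    |arg (1 - (1 - p) * ζ) - arg (1 + p * ζ)| < π / 2 := by
  obtain ⟨hc, hd⟩ := Hfun_factors_re_pos hp0 hp1 (hζ.trans_lt (by norm_num))
  refine abs_arg_sub_arg_lt_pi_div_two_of_re_mul_conj_pos ?_ ?_
  · have hc' := abs_arg_lt_pi_div_two_iff.2 (Or.inl hc)
    have hd' := abs_arg_lt_pi_div_two_iff.2 (Or.inl hd)
    rw [abs_lt] at hc' hd' ⊢
    constructor <;> linarith
  · have hre := abs_le.1 ((abs_re_le_norm ζ).trans hζ)
    have hsq : ζ.re ^ 2 + ζ.im ^ 2 ≤ 1 / 16 := by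
      rw [show ζ.re ^ 2 + ζ.im ^ 2 = ‖ζ‖ ^ 2 by rw [Complex.sq_norm, normSq_apply]; ring]
      nlinarith [norm_nonneg ζ]
    simp only [mul_re, mul_im, conj_re, conj_im, sub_re, sub_im, add_re, add_im, one_re, one_im,
      ofReal_re, ofReal_im]
    nlinarith [mul_nonneg hp0 (sub_nonneg.2 hp1)]

theorem norm_Hfun_le (hp0 : 0 ≤ p) (hp1 : p ≤ 1) (hζ : ‖ζ‖ ≤ 1 / 4) :
    ‖Hfun p ζ‖ ≤ p * (1 - p) * ‖ζ‖ ^ 2 := by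
  obtain ⟨hc, hd⟩ := Hfun_factors_re_pos hp0 hp1 (hζ.trans_lt (by norm_num))
  set g := (p : ℂ) * log (1 - (1 - p) * ζ) + (1 - p) * log (1 + p * ζ) with hg
  have hH : Hfun p ζ = exp g - 1 := by
    rw [Hfun, cpow_def_of_ne_zero (ne_of_apply_ne re (by simpa using hc.ne')),
      cpow_def_of_ne_zero (ne_of_apply_ne re (by simpa using hd.ne')), ← Complex.exp_add, hg]
    ring_nf
  have hg_le : ‖g‖ ≤ 2 / 3 * (p * (1 - p) * ‖ζ‖ ^ 2) := by
    refine (norm_weighted_log_Hfun_factors_le hp0 hp1 (hζ.trans_lt (by norm_num))).trans ?_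
    have : (1 - ‖ζ‖)⁻¹ ≤ 4 / 3 := by
      rw [inv_le_comm₀ (by linarith) (by norm_num)]; linarith
    have : 0 ≤ p * (1 - p) * ‖ζ‖ ^ 2 := by have := sub_nonneg.2 hp1; positivity
    nlinarith
  have hq : p * (1 - p) ≤ 1 / 4 := by nlinarith [sq_nonneg (p - 1 / 2)]
  have hg1 : ‖g‖ ≤ 1 / 96 := by
    have : ‖ζ‖ ^ 2 ≤ 1 / 16 := by nlinarith [norm_nonneg ζ]
    nlinarith [norm_nonneg ζ]
  calc ‖Hfun p ζ‖ = ‖(exp g - 1 - g) + g‖ := by rw [hH]; ring_nf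
    _ ≤ ‖g‖ ^ 2 + ‖g‖ := norm_add_le_of_le (norm_exp_sub_one_sub_id_le (by linarith)) le_rfl
    _ ≤ _ := by nlinarith [norm_nonneg g]

end HfunFactors

theorem slitf_newton_step {p : ℝ} (hp0 : 0 ≤ p) (hp1 : p ≤ 1) {w z : ℂ} (hw : w ≠ 0)
    (hz : z ∉ slitSet p) (hz0 : z ≠ 0) (hf : 1 < ‖slitf p z‖)
    (hζ : ‖(slitf p z - w) / w / z‖ ≤ 1 / 4)
    (hz' : z - (slitf p z - w) / deriv (slitf p) z ∉ slitSet p) :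
    slitf p (z - (slitf p z - w) / deriv (slitf p) z)
      = w * (Hfun p ((slitf p z - w) / w / z) + 1) := by
  obtain ⟨hA, hB⟩ := slitPlane_of_notMem_slitSet hz
  obtain ⟨hA', hB'⟩ := slitPlane_of_notMem_slitSet hz'
  have hA0 := slitPlane_ne_zero hA
  have hB0 := slitPlane_ne_zero hB
  have hf0 : slitf p z ≠ 0 := norm_pos_iff.1 (one_pos.trans hf)
  obtain ⟨hc, hd⟩ := Hfun_factors_re_pos hp0 hp1 (hζ.trans_lt (by norm_num))
  set ζ := (slitf p z - w) / w / z with hζdef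
  set zt := z - (slitf p z - w) / deriv (slitf p) z with hzt
  have hAc : zt - p = (z - p) * (w / slitf p z * (1 - (1 - p) * ζ)) := by
    rw [hzt, hζdef, (hasDerivAt_slitf hz).deriv]
    field_simp
    ring
  have hBd : zt + 1 - p = (z + 1 - p) * (w / slitf p z * (1 + p * ζ)) := by
    rw [hzt, hζdef, (hasDerivAt_slitf hz).deriv]
    field_simp
    ring
  rw [show slitf p zt = (zt - p) ^ (p : ℂ) * (zt + 1 - p) ^ (1 - (p : ℂ)) from rfl, hAc, hBd,
    cpow_mul_cpow_one_sub_of_abs_arg_lt (p : ℂ) hA0 hB0 (ne_of_apply_ne re (by simpa using hc.ne'))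
      (ne_of_apply_ne re (by simpa using hd.ne')) (div_ne_zero hw hf0) ?_]
  · rw [Hfun, sub_add_cancel, ← slitf]
    field_simp
  · have h1 := abs_arg_sub_arg_lt_pi_of_im_eq hA' hB' (by simp)
    rw [hAc, hBd] at h1
    have h2 := abs_arg_sub_arg_lt_pi_div_two_of_re_mul_conj_pos
      (abs_arg_sub_arg_lt_pi_of_im_eq hA hB (by simp))
      (re_mul_conj_pos_of_one_lt_norm_slitf hp0 hp1 hf)
    have h3 := abs_arg_sub_arg_Hfun_factors_lt hp0 hp1 hζ
    rw [abs_lt] at h1 h2 h3 ⊢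
    constructor <;> linarith

theorem one_lt_norm_slitf_and_le_norm_of_norm_sub_le {p : ℝ} (hp0 : 0 ≤ p) (hp1 : p ≤ 1)
    {w z : ℂ} (hw : 1.6 ≤ ‖w‖) (hfw : ‖slitf p z - w‖ ≤ p * (1 - p) / 2 * ‖w‖) :
    1 < ‖slitf p z‖ ∧ 0.6 + 1.2 * (p * (1 - p)) ≤ ‖z‖ := by
  have hq : p * (1 - p) ≤ 1 / 4 := by nlinarith [sq_nonneg (p - 1 / 2)]
  have hq0 : 0 ≤ p * (1 - p) := mul_nonneg hp0 (sub_nonneg.2 hp1)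
  have hf_lower := norm_le_norm_add_norm_sub (slitf p z) w
  have hf_upper := norm_slitf_le hp0 hp1 z
  constructor <;> nlinarith

/-- The key step in the proof of Theorem 4.1: if `|w| ≥ (1+√5)/2`,
`F(z) = (f(z)−w)/w`, and `|F(z)| ≤ p(1−p)/2`, then `|z|² ≥ p(1−p)`; moreover, if the Newton
iterate `z̃ = z − F(z)/F′(z)` lies in `ℂ ∖ (−∞,p]`, then `F(z̃) = H(F(z)/z)` and
`|F(z̃)| ≤ (2/3)|F(z)|² < p(1−p)/2`. -/
theorem newton_one_step (p : ℝ) (hp0 : 0 < p) (hp1 : p < 1) (w : ℂ)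
    (habs : (1 + Real.sqrt 5) / 2 ≤ ‖w‖)
    (F : ℂ → ℂ) (hF : F = fun z => (slitf p z - w) / w)
    (z : ℂ) (hz : z ∉ slitSet p) (hFz : ‖F z‖ ≤ p * (1 - p) / 2) :
    p * (1 - p) ≤ ‖z‖ ^ 2 ∧
      (z - F z / deriv F z ∉ slitSet p →
        F (z - F z / deriv F z) = Hfun p (F z / z) ∧
        ‖F (z - F z / deriv F z)‖ ≤ 2 / 3 * ‖F z‖ ^ 2 ∧
        2 / 3 * ‖F z‖ ^ 2 < p * (1 - p) / 2) := by
  have hFy (y : ℂ) : F y = (slitf p y - w) / w := by rw [hF]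
  have hw_lower : 1.6 ≤ ‖w‖ :=
    le_trans (by linarith [le_sqrt_of_sq_le (by norm_num : (2.2 : ℝ) ^ 2 ≤ 5)]) habs
  have hw : w ≠ 0 := norm_pos_iff.1 (by linarith)
  have hfw : ‖slitf p z - w‖ ≤ p * (1 - p) / 2 * ‖w‖ := by
    rwa [← div_le_iff₀ (norm_pos_iff.2 hw), ← norm_div, ← hFy]
  obtain ⟨hf, hz_lower⟩ := one_lt_norm_slitf_and_le_norm_of_norm_sub_le hp0.le hp1.le hw_lower hfw
  have hq : p * (1 - p) ≤ 1 / 4 := by nlinarith [sq_nonneg (p - 1 / 2)]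
  have hF0 := norm_nonneg (F z)
  refine ⟨by nlinarith, fun hz' => ?_⟩
  have hz0 : z ≠ 0 := norm_pos_iff.1 (by linarith)
  have hζ : ‖F z / z‖ ≤ 1 / 4 := by rw [norm_div, div_le_iff₀ (by linarith)]; linarith
  have hHF : F (z - F z / deriv F z) = Hfun p (F z / z) := by
    rw [hF, deriv_div_const, deriv_sub_const, div_div_div_cancel_right₀ hw] at hz' ⊢
    rw [hFy z] at hζ
    simp only
    rw [slitf_newton_step hp0.le hp1.le hw hz hz0 hf hζ hz']
    field_simp
    ring
  refine ⟨hHF, ?_, by nlinarith⟩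
  have hz_sq : 3 * (p * (1 - p)) ≤ 2 * ‖z‖ ^ 2 := by nlinarith
  calc ‖F (z - F z / deriv F z)‖ ≤ p * (1 - p) * ‖F z / z‖ ^ 2 :=
        hHF ▸ norm_Hfun_le hp0.le hp1.le hζ
    _ ≤ 2 / 3 * ‖F z‖ ^ 2 := by
        rw [norm_div, div_pow, mul_div_assoc', div_le_iff₀ (by positivity)]
        nlinarith [sq_nonneg ‖F z‖]
end
end

section
/- Let a be a point of the upper half-plane ℍ = {z : Im z > 0}, let p = (arg a)/π ∈ (0,1), C = |a|/(p^p (1−p)^{1−p}), and define g_a(z) = C (z−p)^p (z+1−p)^{1−p} using principal branches of the complex powers. Then g_a is a conformal bijection of ℍ onto ℍ ∖ L, where L is the line segment from 0 to a; moreover g_a extends continuously to ℝ with g_a(0) = a and g_a(p) = g_a(p−1) = 0. -/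
/-!
On `ℍ` write `g = C · exp G` with `G z = p log (z - p) + (1 - p) log (z + 1 - p)`, whose
imaginary part `p arg (z - p) + (1 - p) arg (z + 1 - p)` lies in `(0, π)`. Since
`G' z = p / (z - p) + (1 - p) / (z + 1 - p)` has negative imaginary part on the convex set `ℍ`,
`G` is injective there, and so is `exp` on the strip `0 < im < π`: hence `g` is injective.

If `g z = t a` with `0 < t ≤ 1`, the angles under which `z` sees `p - 1` and `p` satisfy
`p arg (z - p) + (1 - p) arg (z + 1 - p) = p π`; the law of sines and the strict concavity of `sin`
then give `|z - p| > p` and `|z + 1 - p| > 1 - p`, so `|g z| > C p^p (1 - p)^(1 - p) = |a|`.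
On `ℝ`, `g` is real outside `[p - 1, p]` and runs along the slit `[0, a]` on `[p - 1, p]`
(weighted AM-GM).

For surjectivity onto `Ω = ℍ \ [0, a]`: `g(ℍ)` is open by the open mapping theorem, and it is
relatively closed in `Ω` because `|g z| ≥ C (|z| - 1)` and `g` is continuous on the closed
half-plane, so a limit point of `g(ℍ)` in `Ω` is a value of `g` at a point that cannot be real.
Finally `Ω` is connected, being star-shaped about `2 a`.
-/

open Complex Set Metric

noncomputable section

def UHP : Set ℂ := {z : ℂ | 0 < z.im}

open scoped Real

lemma Real.mul_sin_lt_sin_mul {p s : ℝ} (hp0 : 0 < p) (hp1 : p < 1) (hs0 : 0 < s)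
    (hsπ : s < π) : p * Real.sin s < Real.sin (p * s) := by
  simpa using strictConcaveOn_sin_Icc.2 (x := 0) (y := s) ⟨le_rfl, Real.pi_pos.le⟩
    ⟨hs0.le, hsπ.le⟩ hs0.ne (sub_pos.2 hp1) hp0 (by ring)

lemma Real.rpow_mul_one_sub_rpow_le {p r : ℝ} (hp0 : 0 < p) (hp1 : p < 1) (hr0 : 0 ≤ r)
    (hr1 : r ≤ 1) : r ^ p * (1 - r) ^ (1 - p) ≤ p ^ p * (1 - p) ^ (1 - p) := by
  have hq0 : 0 < 1 - p := sub_pos.2 hp1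
  have hamgm := Real.geom_mean_le_arith_mean2_weighted hp0.le hq0.le (div_nonneg hr0 hp0.le)
    (div_nonneg (sub_nonneg.2 hr1) hq0.le) (add_sub_cancel p 1)
  rw [mul_div_cancel₀ _ hp0.ne', mul_div_cancel₀ _ hq0.ne', add_sub_cancel,
    Real.div_rpow hr0 hp0.le, Real.div_rpow (sub_nonneg.2 hr1) hq0.le, div_mul_div_comm,
    div_le_one (mul_pos (Real.rpow_pos_of_pos hp0 p) (Real.rpow_pos_of_pos hq0 _))] at hamgm
  exact hamgm

lemma Real.le_rpow_mul_rpow_one_sub {m a b p : ℝ} (hm : 0 ≤ m) (ha : m ≤ a) (hb : m ≤ b)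
    (hp0 : 0 ≤ p) (hp1 : p ≤ 1) : m ≤ a ^ p * b ^ (1 - p) :=
  calc m = m ^ p * m ^ (1 - p) := by
        rw [← Real.rpow_add' hm (by norm_num), add_sub_cancel, Real.rpow_one]
    _ ≤ a ^ p * b ^ (1 - p) :=
        mul_le_mul (Real.rpow_le_rpow hm ha hp0) (Real.rpow_le_rpow hm hb (sub_nonneg.2 hp1))
          (Real.rpow_nonneg hm _) (Real.rpow_nonneg (hm.trans ha) _)

namespace Complex

lemma arg_mem_Ioo_of_im_pos {z : ℂ} (hz : 0 < z.im) : arg z ∈ Ioo 0 π :=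
  ⟨(arg_nonneg_iff.2 hz.le).lt_of_ne fun h => hz.ne' (arg_eq_zero_iff.1 h.symm).2,
    arg_lt_pi_iff.2 (Or.inr hz.ne')⟩

lemma inv_im_neg {z : ℂ} (hz : 0 < z.im) : z⁻¹.im < 0 := by
  rw [inv_im]
  exact div_neg_of_neg_of_pos (neg_neg_of_pos hz) (normSq_pos.2 fun h => by simp [h] at hz)

lemma sub_ofReal_ne_zero {z : ℂ} (hz : 0 < z.im) (x : ℝ) : z - x ≠ 0 :=
  ne_of_apply_ne im (by simpa using hz.ne')

lemma sub_ofReal_mem_slitPlane {z : ℂ} (hz : 0 < z.im) (x : ℝ) : z - x ∈ slitPlane :=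
  mem_slitPlane_iff.2 (Or.inr (by simpa using hz.ne'))

lemma add_one_sub_ofReal_eq (z : ℂ) (p : ℝ) : z + 1 - p = z - (p - 1 : ℝ) := by
  push_cast; ring

lemma norm_mul_sin_arg_sub_arg_add_one (u : ℂ) :
    ‖u‖ * Real.sin (arg u - arg (u + 1)) = Real.sin (arg (u + 1)) := by
  have hsin : ‖u‖ * Real.sin (arg u) = ‖u + 1‖ * Real.sin (arg (u + 1)) := by
    simp [norm_mul_sin_arg]
  have hcos : ‖u + 1‖ * Real.cos (arg (u + 1)) - ‖u‖ * Real.cos (arg u) = 1 := by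
    simp [norm_mul_cos_arg]
  rw [Real.sin_sub]
  linear_combination Real.cos (arg (u + 1)) * hsin + Real.sin (arg (u + 1)) * hcos

lemma norm_add_one_mul_sin_arg_sub_arg (u : ℂ) :
    ‖u + 1‖ * Real.sin (arg u - arg (u + 1)) = Real.sin (arg u) := by
  have hsin : ‖u‖ * Real.sin (arg u) = ‖u + 1‖ * Real.sin (arg (u + 1)) := by
    simp [norm_mul_sin_arg]
  have hcos : ‖u + 1‖ * Real.cos (arg (u + 1)) - ‖u‖ * Real.cos (arg u) = 1 := by
    simp [norm_mul_cos_arg]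
  rw [Real.sin_sub]
  linear_combination Real.cos (arg u) * hsin + Real.sin (arg u) * hcos

lemma lt_norm_of_weighted_arg_eq {p : ℝ} (hp0 : 0 < p) (hp1 : p < 1) {u : ℂ} (hu : 0 < u.im)
    (harg : p * arg u + (1 - p) * arg (u + 1) = p * π) : p < ‖u‖ ∧ 1 - p < ‖u + 1‖ := by
  obtain ⟨hα0, hαπ⟩ := arg_mem_Ioo_of_im_pos hu
  obtain ⟨hβ0, hβπ⟩ := arg_mem_Ioo_of_im_pos (z := u + 1) (by simpa using hu)
  have hA := norm_mul_sin_arg_sub_arg_add_one u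
  have hB := norm_add_one_mul_sin_arg_sub_arg u
  have hsin_pos : 0 < Real.sin (arg u - arg (u + 1)) :=
    pos_of_mul_pos_right (hA ▸ Real.sin_pos_of_pos_of_lt_pi hβ0 hβπ) (norm_nonneg u)
  have hβα : arg (u + 1) < arg u := by
    by_contra! h
    exact (Real.sin_nonpos_of_nonpos_of_neg_pi_le (by linarith) (by linarith)).not_gt hsin_pos
  -- `s` is the exterior angle at `u` of the triangle `-1, 0, u`, the sum of its angles
  -- `arg (u + 1)` at `-1` and `π - arg u` at `0`; `harg` says that these are `p s` and `(1 - p) s`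
  set s := π - arg u + arg (u + 1) with hs
  have hs0 : 0 < s := by linarith
  have hsπ : s < π := by linarith
  have hsin : Real.sin (arg u - arg (u + 1)) = Real.sin s := by
    rw [← Real.sin_pi_sub, hs]; ring_nf
  have hsin_s : 0 < Real.sin s := hsin ▸ hsin_pos
  constructor
  · have h : ‖u‖ * Real.sin s = Real.sin (p * s) := by
      rw [← hsin, hA, hs]; congr 1; linarith
    nlinarith [Real.mul_sin_lt_sin_mul hp0 hp1 hs0 hsπ]
  · have h : ‖u + 1‖ * Real.sin s = Real.sin ((1 - p) * s) := by
      rw [← hsin, hB, ← Real.sin_pi_sub, hs]; congr 1; linarith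
    nlinarith [Real.mul_sin_lt_sin_mul (sub_pos.2 hp1) (by linarith) hs0 hsπ]

lemma continuousOn_cpow_const_of_im_nonneg {c : ℂ} (hc : 0 < c.re) :
    ContinuousOn (· ^ c) {z : ℂ | 0 ≤ z.im} := by
  intro z hz
  by_cases h0 : z = 0
  · subst h0
    exact ((continuousAt_cpow_zero_of_re_pos hc).comp (f := fun w : ℂ => (w, c))
      (continuousAt_id.prodMk continuousAt_const)).continuousWithinAt
  by_cases hslit : z ∈ slitPlane
  · exact (continuousAt_cpow_const hslit).continuousWithinAt
  -- on the negative axis `log` is continuous from above, which is all `(· ^ c)` needs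
  obtain ⟨hre, him⟩ : z.re < 0 ∧ z.im = 0 := by
    rw [mem_slitPlane_iff, not_or, not_lt, not_not] at hslit
    exact ⟨hslit.1.lt_of_ne fun h => h0 (ext h hslit.2), hslit.2⟩
  have hexp : ContinuousWithinAt (fun w => exp (log w * c)) {w : ℂ | 0 ≤ w.im} z :=
    continuous_exp.continuousAt.comp_continuousWithinAt
      ((continuousWithinAt_log_of_re_neg_of_im_zero hre him).mul continuousWithinAt_const)
  refine hexp.congr_of_eventuallyEq_of_mem ?_ hz
  filter_upwards [nhdsWithin_le_nhds (isOpen_ne.mem_nhds h0)] with w hw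
  exact cpow_def_of_ne_zero hw c

end Complex

/-- Noshiro–Warschawski. -/
theorem Convex.injOn_of_hasDerivAt_of_re_pos {f f' : ℂ → ℂ} {s : Set ℂ} (hs : Convex ℝ s)
    (hf : ∀ z ∈ s, HasDerivAt f (f' z) z) (hf' : ∀ z ∈ s, 0 < (f' z).re) : InjOn f s := by
  intro z₁ h₁ z₂ h₂ heq
  by_contra hne
  set d := z₂ - z₁
  have hd : d ≠ 0 := sub_ne_zero.2 (Ne.symm hne)
  have hmem : ∀ t ∈ Icc (0 : ℝ) 1, z₁ + t * d ∈ s := fun t ht => by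
    simpa [real_smul] using hs.add_smul_sub_mem h₁ h₂ ht
  have hderiv : ∀ t ∈ Icc (0 : ℝ) 1,
      HasDerivAt (fun t : ℝ => (f (z₁ + t * d) / d).re) (f' (z₁ + t * d)).re t := by
    intro t ht
    have hline : HasDerivAt (fun w : ℂ => z₁ + w * d) d t := by
      simpa using ((hasDerivAt_id (t : ℂ)).mul_const d).const_add z₁
    simpa [mul_div_cancel_right₀ _ hd] using
      (((hf _ (hmem t ht)).comp (t : ℂ) hline).div_const d).real_of_complex
  obtain ⟨c, hc, hslope⟩ := exists_hasDerivAt_eq_slope _ _ zero_lt_one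
    (fun t ht => (hderiv t ht).continuousAt.continuousWithinAt)
    (fun t ht => hderiv t (Ioo_subset_Icc_self ht))
  have hends : z₁ + ((1 : ℝ) : ℂ) * d = z₂ := by simp [d]
  simp only [hends, ofReal_zero, zero_mul, add_zero, heq, sub_self, zero_div] at hslope
  exact (hf' _ (hmem c (Ioo_subset_Icc_self hc))).ne' hslope

lemma isOpen_UHP : IsOpen UHP := isOpen_lt continuous_const continuous_im

lemma starConvex_UHP_diff_segment {a : ℂ} (ha : 0 < a.im) :
    StarConvex ℝ ((2 : ℝ) • a) (UHP \ segment ℝ 0 a) := by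
  rintro w ⟨hw, hws⟩ μ ν hμ hν hμν
  have hre (v : ℂ) (c : ℝ) : (c • v).re = c * v.re := by simp
  have him (v : ℂ) (c : ℝ) : (c • v).im = c * v.im := by simp
  have hw' : 0 < w.im := hw
  refine ⟨show 0 < (μ • (2 : ℝ) • a + ν • w).im by
    simp only [add_im, him]
    rcases hμ.eq_or_lt with rfl | hμ <;> nlinarith, ?_⟩
  rw [segment_eq_image] at hws ⊢
  rintro ⟨τ, ⟨hτ0, hτ1⟩, hτ⟩
  simp only [smul_zero, zero_add] at hτ
  have hτre := congrArg re hτ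
  have hτim := congrArg im hτ
  simp only [add_re, add_im, hre, him] at hτre hτim
  rcases hν.eq_or_lt with rfl | hν
  · nlinarith
  -- otherwise `w = ((τ - 2 μ) / ν) • a` lies on the slit
  have hs : 0 < τ - 2 * μ := by nlinarith
  refine hws ⟨(τ - 2 * μ) / ν, ⟨by positivity, (div_le_one hν).2 (by linarith)⟩, ?_⟩
  simp only [smul_zero, zero_add]
  apply Complex.ext <;> simp only [hre, him] <;> field_simp <;> linarith

def slitMap (p C : ℝ) (z : ℂ) : ℂ :=
  C * ((z - p) ^ (p : ℂ) * (z + 1 - p) ^ (1 - (p : ℂ)))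

def slitLog (p : ℝ) (z : ℂ) : ℂ :=
  p * log (z - p) + (1 - p) * log (z + 1 - p)

section SlitMap

variable {p C : ℝ} {z : ℂ}

lemma slitMap_eq_mul_exp_slitLog (hz : 0 < z.im) : slitMap p C z = C * exp (slitLog p z) := by
  rw [slitMap, slitLog, add_one_sub_ofReal_eq, cpow_def_of_ne_zero (sub_ofReal_ne_zero hz _),
    cpow_def_of_ne_zero (sub_ofReal_ne_zero hz _), ← exp_add]
  ring_nf

lemma slitLog_im (z : ℂ) : (slitLog p z).im = p * arg (z - p) + (1 - p) * arg (z + 1 - p) := by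
  simp [slitLog, log_im]

lemma slitLog_im_mem_Ioo (hp0 : 0 < p) (hp1 : p < 1) (hz : 0 < z.im) :
    (slitLog p z).im ∈ Ioo 0 π := by
  obtain ⟨hα0, hαπ⟩ := arg_mem_Ioo_of_im_pos (z := z - p) (by simpa using hz)
  obtain ⟨hβ0, hβπ⟩ := arg_mem_Ioo_of_im_pos (z := z + 1 - p) (by simpa using hz)
  rw [slitLog_im]
  constructor <;> nlinarith

lemma log_slitMap_div (hp0 : 0 < p) (hp1 : p < 1) (hC : C ≠ 0) (hz : 0 < z.im) :
    log (slitMap p C z / C) = slitLog p z := by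
  obtain ⟨him0, himπ⟩ := slitLog_im_mem_Ioo hp0 hp1 hz
  rw [slitMap_eq_mul_exp_slitLog hz, mul_div_cancel_left₀ _ (ofReal_ne_zero.2 hC)]
  exact log_exp (by linarith) himπ.le

lemma hasDerivAt_slitLog (hz : 0 < z.im) :
    HasDerivAt (slitLog p) (p * (z - p)⁻¹ + (1 - p) * (z + 1 - p)⁻¹) z := by
  have hlog (x : ℝ) : HasDerivAt (fun w => log (w - x)) (z - x)⁻¹ z := by
    simpa using ((hasDerivAt_id z).sub_const (x : ℂ)).clog (sub_ofReal_mem_slitPlane hz x)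
  have h := ((hlog p).const_mul (p : ℂ)).add ((hlog (p - 1)).const_mul (1 - p : ℂ))
  simp only [← add_one_sub_ofReal_eq] at h
  exact h

lemma injOn_slitLog (hp0 : 0 < p) (hp1 : p < 1) : InjOn (slitLog p) UHP := by
  -- the derivative takes values in the lower half-plane, so `I * slitLog p` has `re > 0`
  have hinj := (convex_halfSpace_im_gt 0).injOn_of_hasDerivAt_of_re_pos
    (fun z hz => (hasDerivAt_slitLog (p := p) hz).const_mul I) fun z (hz : 0 < z.im) => by
      have hu := inv_im_neg (z := z - p) (by simpa using hz)
      have hv := inv_im_neg (z := z + 1 - p) (by simpa using hz)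
      simp only [I_mul_re, add_im, mul_im, sub_re, sub_im, ofReal_re, ofReal_im, one_re, one_im]
      nlinarith
  exact fun z hz w hw h => hinj hz hw (by simp only [h])

lemma injOn_slitMap (hp0 : 0 < p) (hp1 : p < 1) (hC : C ≠ 0) : InjOn (slitMap p C) UHP :=
  fun z hz w hw h => injOn_slitLog hp0 hp1 hz hw <| by
    rw [← log_slitMap_div hp0 hp1 hC hz, ← log_slitMap_div hp0 hp1 hC hw, h]

lemma differentiableOn_slitMap : DifferentiableOn ℂ (slitMap p C) UHP := fun z hz =>
  ((((differentiableAt_id.sub_const _).cpow_const (sub_ofReal_mem_slitPlane hz p)).mul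
    (((differentiableAt_id.add_const 1).sub_const _).cpow_const
      (by simpa [add_one_sub_ofReal_eq] using sub_ofReal_mem_slitPlane hz (p - 1)))).const_mul
    _).differentiableWithinAt

lemma continuousOn_slitMap (hp0 : 0 < p) (hp1 : p < 1) :
    ContinuousOn (slitMap p C) {z : ℂ | 0 ≤ z.im} := by
  have hshift (x : ℝ) : MapsTo (fun z : ℂ => z - x) {z | 0 ≤ z.im} {z | 0 ≤ z.im} :=
    fun z hz => by simpa using hz
  have hpow (x : ℝ) {c : ℂ} (hc : 0 < c.re) :=
    (continuousOn_cpow_const_of_im_nonneg hc).comp (continuousOn_id.sub continuousOn_const)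
      (hshift x)
  have h := continuousOn_const (c := (C : ℂ)).mul
    ((hpow p (c := p) (by simpa using hp0)).mul (hpow (p - 1) (c := 1 - p) (by simpa using hp1)))
  refine h.congr fun z _ => ?_
  simp [slitMap, add_one_sub_ofReal_eq]

lemma norm_slitMap (hC : 0 ≤ C) (z : ℂ) :
    ‖slitMap p C z‖ = C * (‖z - p‖ ^ p * ‖z + 1 - p‖ ^ (1 - p)) := by
  rw [slitMap, show (1 : ℂ) - p = (1 - p : ℝ) by push_cast; ring, norm_mul, norm_mul,
    norm_cpow_real, norm_cpow_real, norm_real, Real.norm_of_nonneg hC]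

lemma slitMap_zero (hp0 : 0 ≤ p) (hp1 : p ≤ 1) :
    slitMap p C 0 = (C * (p ^ p * (1 - p) ^ (1 - p)) : ℝ) * exp ((p * π : ℝ) * I) := by
  have hneg : (0 : ℂ) - p = (-p : ℝ) := by push_cast; ring
  have hpos : (0 : ℂ) + 1 - p = (1 - p : ℝ) := by push_cast; ring
  rw [slitMap, hneg, hpos, ofReal_cpow_of_nonpos (by linarith), ofReal_neg, neg_neg,
    show (1 : ℂ) - p = (1 - p : ℝ) by push_cast; ring, ← ofReal_cpow hp0,
    ← ofReal_cpow (by linarith)]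
  push_cast
  ring_nf

lemma arg_slitMap_zero (hp0 : 0 < p) (hp1 : p < 1) (hC : 0 < C) :
    arg (slitMap p C 0) = p * π := by
  have hq0 : 0 < 1 - p := sub_pos.2 hp1
  have hκ : 0 < p ^ p * (1 - p) ^ (1 - p) := by positivity
  rw [slitMap_zero hp0.le hp1.le, arg_real_mul _ (mul_pos hC hκ), exp_mul_I,
    arg_cos_add_sin_mul_I ⟨by nlinarith [Real.pi_pos], by nlinarith [Real.pi_pos]⟩]

lemma norm_slitMap_zero (hp0 : 0 ≤ p) (hp1 : p ≤ 1) (hC : 0 ≤ C) :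
    ‖slitMap p C 0‖ = C * (p ^ p * (1 - p) ^ (1 - p)) := by
  rw [norm_slitMap hC, zero_sub, norm_neg, zero_add, ← ofReal_one, ← ofReal_sub, norm_real,
    norm_real, Real.norm_of_nonneg hp0, Real.norm_of_nonneg (sub_nonneg.2 hp1)]

lemma slitMap_zero_im_pos (hp0 : 0 < p) (hp1 : p < 1) (hC : 0 < C) :
    0 < (slitMap p C 0).im := by
  have hq0 : 0 < 1 - p := sub_pos.2 hp1
  have hsin : 0 < Real.sin (p * π) :=
    Real.sin_pos_of_pos_of_lt_pi (by positivity) (by nlinarith [Real.pi_pos])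
  rw [slitMap_zero hp0.le hp1.le, im_ofReal_mul, exp_ofReal_mul_I_im]
  positivity

lemma slitMap_im_pos (hp0 : 0 < p) (hp1 : p < 1) (hC : 0 < C) (hz : 0 < z.im) :
    0 < (slitMap p C z).im := by
  obtain ⟨him0, himπ⟩ := slitLog_im_mem_Ioo hp0 hp1 hz
  rw [slitMap_eq_mul_exp_slitLog hz, im_ofReal_mul, exp_im]
  have := Real.sin_pos_of_pos_of_lt_pi him0 himπ
  positivity

lemma slitMap_not_mem_segment (hp0 : 0 < p) (hp1 : p < 1) (hC : 0 < C) (hz : 0 < z.im) :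
    slitMap p C z ∉ segment ℝ 0 (slitMap p C 0) := by
  rw [segment_eq_image]
  rintro ⟨t, ⟨ht0, ht1⟩, hzt⟩
  simp only [smul_zero, zero_add] at hzt
  have ht : 0 < t := ht0.lt_of_ne <| by
    rintro rfl
    exact (slitMap_im_pos hp0 hp1 hC hz).ne' (by simp [← hzt])
  have harg : p * arg (z - p) + (1 - p) * arg (z - p + 1) = p * π :=
    calc _ = (slitLog p z).im := by rw [slitLog_im, sub_add_eq_add_sub]
      _ = arg (slitMap p C z / C) := by rw [← log_slitMap_div hp0 hp1 hC.ne' hz, log_im]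
      _ = arg (slitMap p C 0) := by
        rw [← hzt, real_smul, div_eq_inv_mul, ← ofReal_inv, arg_real_mul _ (inv_pos.2 hC),
          arg_real_mul _ ht]
      _ = p * π := arg_slitMap_zero hp0 hp1 hC
  obtain ⟨hA, hB⟩ := lt_norm_of_weighted_arg_eq hp0 hp1 (by simpa using hz) harg
  rw [sub_add_eq_add_sub] at hB
  have hle : ‖slitMap p C z‖ ≤ ‖slitMap p C 0‖ := by
    rw [← hzt, norm_smul, Real.norm_of_nonneg ht0]
    exact mul_le_of_le_one_left (norm_nonneg _) ht1
  rw [norm_slitMap hC.le, norm_slitMap_zero hp0.le hp1.le hC.le] at hle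
  have hq0 : 0 < 1 - p := sub_pos.2 hp1
  have hlt : p ^ p * (1 - p) ^ (1 - p) < ‖z - p‖ ^ p * ‖z + 1 - p‖ ^ (1 - p) :=
    mul_lt_mul'' (Real.rpow_lt_rpow hp0.le hA hp0) (Real.rpow_lt_rpow hq0.le hB hq0)
      (Real.rpow_nonneg hp0.le _) (Real.rpow_nonneg hq0.le _)
  exact (le_of_mul_le_mul_left hle hC).not_gt hlt

lemma slitMap_ofReal_im_eq_zero_of_lt {x : ℝ} (hx : x < p - 1) :
    (slitMap p C x).im = 0 := by
  have hu : (x : ℂ) - p = (x - p : ℝ) := by push_cast; ring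
  have hv : (x : ℂ) + 1 - p = (x + 1 - p : ℝ) := by push_cast; ring
  rw [slitMap, hu, hv, ofReal_cpow_of_nonpos (by linarith), ofReal_cpow_of_nonpos (by linarith),
    ← ofReal_neg, ← ofReal_neg, show (1 : ℂ) - p = (1 - p : ℝ) by push_cast; ring,
    ← ofReal_cpow (by linarith), ← ofReal_cpow (by linarith)]
  have hphase : exp (π * I * p) * exp (π * I * (1 - p : ℝ)) = -1 := by
    rw [← exp_add, ← exp_pi_mul_I]; push_cast; ring_nf
  rw [mul_mul_mul_comm, hphase]
  simp

lemma slitMap_ofReal_im_eq_zero_of_gt {x : ℝ} (hx : p < x) : (slitMap p C x).im = 0 := by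
  have hu : (x : ℂ) - p = (x - p : ℝ) := by push_cast; ring
  have hv : (x : ℂ) + 1 - p = (x + 1 - p : ℝ) := by push_cast; ring
  rw [slitMap, hu, hv, show (1 : ℂ) - p = (1 - p : ℝ) by push_cast; ring,
    ← ofReal_cpow (by linarith), ← ofReal_cpow (by linarith)]
  simp only [← ofReal_mul, ofReal_im]

lemma slitMap_ofReal_mem_segment (hp0 : 0 < p) (hp1 : p < 1) {x : ℝ}
    (hx : x ∈ Icc (p - 1) p) : slitMap p C x ∈ segment ℝ 0 (slitMap p C 0) := by
  have hu : (x : ℂ) - p = (x - p : ℝ) := by push_cast; ring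
  have hv : (x : ℂ) + 1 - p = (1 - (p - x) : ℝ) := by push_cast; ring
  have hq0 : 0 < 1 - p := sub_pos.2 hp1
  have hκ : 0 < p ^ p * (1 - p) ^ (1 - p) := by positivity
  have hle := Real.rpow_mul_one_sub_rpow_le hp0 hp1 (r := p - x) (by linarith [hx.2])
    (by linarith [hx.1])
  have hM0 : 0 ≤ (p - x) ^ p * (1 - (p - x)) ^ (1 - p) :=
    mul_nonneg (Real.rpow_nonneg (by linarith [hx.2]) _) (Real.rpow_nonneg (by linarith [hx.1]) _)
  have hval : slitMap p C x =
      (C * ((p - x) ^ p * (1 - (p - x)) ^ (1 - p)) : ℝ) * exp ((p * π : ℝ) * I) := by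
    rw [slitMap, hu, hv, ofReal_cpow_of_nonpos (by linarith [hx.2]),
      ← ofReal_neg, neg_sub, show (1 : ℂ) - p = (1 - p : ℝ) by push_cast; ring,
      ← ofReal_cpow (by linarith [hx.2]), ← ofReal_cpow (by linarith [hx.1])]
    push_cast
    ring_nf
  rw [segment_eq_image]
  refine ⟨(p - x) ^ p * (1 - (p - x)) ^ (1 - p) / (p ^ p * (1 - p) ^ (1 - p)),
    ⟨div_nonneg hM0 hκ.le, (div_le_one hκ).2 hle⟩, ?_⟩
  simp only [smul_zero, zero_add]
  rw [slitMap_zero hp0.le hp1.le, hval, real_smul, ← mul_assoc, ← ofReal_mul,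
    mul_left_comm, div_mul_cancel₀ _ hκ.ne']

lemma slitMap_ofReal_not_mem (hp0 : 0 < p) (hp1 : p < 1) (x : ℝ) :
    slitMap p C x ∉ UHP \ segment ℝ 0 (slitMap p C 0) := by
  rintro ⟨him, hseg⟩
  rcases lt_or_ge x (p - 1) with hx | hx
  · exact (slitMap_ofReal_im_eq_zero_of_lt hx).not_gt him
  rcases le_or_gt x p with hx' | hx'
  · exact hseg (slitMap_ofReal_mem_segment hp0 hp1 ⟨hx, hx'⟩)
  · exact (slitMap_ofReal_im_eq_zero_of_gt hx').not_gt him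

lemma mul_norm_sub_one_le_norm_slitMap (hp0 : 0 < p) (hp1 : p < 1) (hC : 0 ≤ C) (z : ℂ) :
    C * (‖z‖ - 1) ≤ ‖slitMap p C z‖ := by
  rcases le_or_gt ‖z‖ 1 with hz | hz
  · exact (mul_nonpos_of_nonneg_of_nonpos hC (by linarith)).trans (norm_nonneg _)
  have hdist (x : ℝ) (hx : |x| ≤ 1) : ‖z‖ - 1 ≤ ‖z - x‖ := by
    have := norm_sub_norm_le z x
    rw [norm_real, Real.norm_eq_abs] at this
    linarith
  rw [norm_slitMap hC]
  refine mul_le_mul_of_nonneg_left (Real.le_rpow_mul_rpow_one_sub (by linarith)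
    (hdist p ?_) ?_ hp0.le hp1.le) hC
  · rw [abs_of_pos hp0]; exact hp1.le
  · rw [add_one_sub_ofReal_eq]
    exact hdist _ (by rw [abs_le]; constructor <;> linarith)

lemma isOpen_image_slitMap (hp0 : 0 < p) (hp1 : p < 1) (hC : C ≠ 0) :
    IsOpen (slitMap p C '' UHP) := by
  rcases (differentiableOn_slitMap.analyticOnNhd isOpen_UHP).is_constant_or_isOpen
    (convex_halfSpace_im_gt 0).isPreconnected with ⟨w, hw⟩ | hopen
  · have hI : I ∈ UHP := show (0 : ℝ) < I.im by simp
    have h2I : 2 * I ∈ UHP := show (0 : ℝ) < (2 * I).im by simp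
    have := injOn_slitMap hp0 hp1 hC hI h2I ((hw I hI).trans (hw _ h2I).symm)
    simpa using congrArg im this
  · exact hopen UHP subset_rfl isOpen_UHP

lemma closure_image_slitMap_inter_subset (hp0 : 0 < p) (hp1 : p < 1) (hC : 0 < C) :
    closure (slitMap p C '' UHP) ∩ (UHP \ segment ℝ 0 (slitMap p C 0)) ⊆
      slitMap p C '' UHP := by
  rintro w ⟨hcl, hwΩ⟩
  -- preimages of points near `w` stay in a compact part of the closed half-plane
  set K := closedBall (0 : ℂ) ((‖w‖ + 1) / C + 1) ∩ {z : ℂ | 0 ≤ z.im}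
  have hK : IsCompact K :=
    (isCompact_closedBall _ _).inter_right (isClosed_le continuous_const continuous_im)
  have hnear : ball w 1 ∩ slitMap p C '' UHP ⊆ slitMap p C '' K := by
    rintro _ ⟨hball, z, hz, rfl⟩
    refine ⟨z, ⟨?_, (show 0 < z.im from hz).le⟩, rfl⟩
    have hgz : ‖slitMap p C z‖ < ‖w‖ + 1 := by
      have := norm_le_norm_add_norm_sub' (slitMap p C z) w
      rw [mem_ball, dist_eq] at hball
      linarith
    have := mul_norm_sub_one_le_norm_slitMap (C := C) hp0 hp1 hC.le z
    rw [mem_closedBall_zero_iff, ← sub_le_iff_le_add, le_div_iff₀ hC]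
    nlinarith
  obtain ⟨z, ⟨-, hz⟩, rfl⟩ : w ∈ slitMap p C '' K := by
    have hclosed := (hK.image_of_continuousOn ((continuousOn_slitMap (C := C) hp0 hp1).mono
      inter_subset_right)).isClosed
    exact hclosed.closure_subset
      (closure_mono hnear (isOpen_ball.inter_closure ⟨mem_ball_self one_pos, hcl⟩))
  rcases (show (0 : ℝ) ≤ z.im from hz).lt_or_eq with hz | hz
  · exact ⟨z, hz, rfl⟩
  · rw [← re_add_im z, ← hz, ofReal_zero, zero_mul, add_zero] at hwΩ
    exact absurd hwΩ (slitMap_ofReal_not_mem hp0 hp1 _)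

lemma image_slitMap (hp0 : 0 < p) (hp1 : p < 1) (hC : 0 < C) :
    slitMap p C '' UHP = UHP \ segment ℝ 0 (slitMap p C 0) := by
  have hsub : slitMap p C '' UHP ⊆ UHP \ segment ℝ 0 (slitMap p C 0) := by
    rintro _ ⟨z, hz, rfl⟩
    exact ⟨slitMap_im_pos hp0 hp1 hC hz, slitMap_not_mem_segment hp0 hp1 hC hz⟩
  have hI : I ∈ UHP := show (0 : ℝ) < I.im by simp
  have hgI := hsub (mem_image_of_mem _ hI)
  have hstar := starConvex_UHP_diff_segment (slitMap_zero_im_pos (C := C) hp0 hp1 hC)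
  have hcenter : (2 : ℝ) • slitMap p C 0 ∈ UHP \ segment ℝ 0 (slitMap p C 0) := by
    simpa using hstar hgI zero_le_one le_rfl (add_zero 1)
  exact hsub.antisymm <|
    (hstar.isPathConnected hcenter).isConnected.isPreconnected.subset_of_closure_inter_subset
      (isOpen_image_slitMap hp0 hp1 hC.ne') ⟨_, hgI, mem_image_of_mem _ hI⟩
      (closure_image_slitMap_inter_subset hp0 hp1 hC)

lemma slitMap_self (hp0 : p ≠ 0) : slitMap p C p = 0 := by
  simp [slitMap, zero_cpow (ofReal_ne_zero.2 hp0)]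

lemma slitMap_sub_one (hp1 : p ≠ 1) : slitMap p C (p - 1) = 0 := by
  simp [slitMap, zero_cpow (sub_ne_zero.2 (ofReal_ne_one.2 hp1).symm)]

end SlitMap

/-- The slit map `g_a(z) = C (z−p)^p (z+1−p)^{1−p}` is a conformal bijection of `ℍ`
onto `ℍ ∖ L`, where `L` is the segment from `0` to `a`; it extends continuously to `ℝ`
with `g_a(0) = a` and `g_a(p) = g_a(p−1) = 0`. -/
theorem slit_map_conformal_bijection (a : ℂ) (ha : a ∈ UHP)
    (p : ℝ) (hp : p = Complex.arg a / Real.pi)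
    (C : ℝ) (hC : C = ‖a‖ / (p ^ p * (1 - p) ^ (1 - p)))
    (g : ℂ → ℂ)
    (hg : g = fun z => (C : ℂ) * ((z - (p : ℂ)) ^ (p : ℂ) * (z + 1 - (p : ℂ)) ^ (1 - (p : ℂ)))) :
    DifferentiableOn ℂ g UHP ∧ Set.InjOn g UHP ∧
      g '' UHP = UHP \ segment ℝ (0 : ℂ) a ∧
      ContinuousOn g {z : ℂ | 0 ≤ z.im} ∧
      g 0 = a ∧ g ((p : ℝ) : ℂ) = 0 ∧ g (((p : ℝ) : ℂ) - 1) = 0 := by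
  obtain ⟨harg0, hargπ⟩ := arg_mem_Ioo_of_im_pos ha
  have hp0 : 0 < p := hp ▸ div_pos harg0 Real.pi_pos
  have hp1 : p < 1 := hp ▸ (div_lt_one Real.pi_pos).2 hargπ
  have hq0 : 0 < 1 - p := sub_pos.2 hp1
  have hκ : 0 < p ^ p * (1 - p) ^ (1 - p) := by positivity
  have hC0 : 0 < C := hC ▸ div_pos (norm_pos_iff.2 fun h => by simp [h, UHP] at ha) hκ
  obtain rfl : g = slitMap p C := hg
  have hg0 : slitMap p C 0 = a := by
    rw [slitMap_zero hp0.le hp1.le, hC, div_mul_cancel₀ _ hκ.ne', hp,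
      div_mul_cancel₀ _ Real.pi_ne_zero, norm_mul_exp_arg_mul_I]
  exact ⟨differentiableOn_slitMap, injOn_slitMap hp0 hp1 hC0.ne',
    hg0 ▸ image_slitMap hp0 hp1 hC0, continuousOn_slitMap hp0 hp1, hg0, slitMap_self hp0.ne',
    slitMap_sub_one hp1.ne⟩
end
end

section
/- Let a be a point of the upper half-plane ℍ = {z : Im z > 0}, set c = |a|²/Im a and b = |a|²/Re a (interpreting z/(1−z/b) = z when Re a = 0), and let γ_a be the arc from 0 to a of the circle through 0 and a centered on ℝ (a vertical segment when Re a = 0); γ_a meets ℝ orthogonally at 0. Then the map f_a(z) = √((z/(1−z/b))² + c²), where √ denotes the branch of the square root mapping ℂ ∖ [0,∞) onto ℍ, is a conformal bijection of ℍ ∖ γ_a onto ℍ with f_a(a) = 0. -/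
open Complex Set Metric

noncomputable section

/-- `f` is a conformal bijection (holomorphic bijection) of `U` onto `V`. -/
def ConfBijOn (f : ℂ → ℂ) (U V : Set ℂ) : Prop :=
  DifferentiableOn ℂ f U ∧ Set.InjOn f U ∧ f '' U = V

/-- The branch of the square root mapping `ℂ ∖ [0,∞)` onto the upper half-plane. -/
def sqrtH (z : ℂ) : ℂ := Complex.I * (-z) ^ ((1 : ℂ) / 2)

/-- The basic geodesic map `f_a(z) = √((z/(1−z/b))² + c²)` with `c = |a|²/Im a`,
`b = |a|²/Re a` (interpreting `z/(1−z/b) = z` when `Re a = 0`). -/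
def geoMap (a : ℂ) (z : ℂ) : ℂ :=
  sqrtH ((if a.re = 0 then z
      else z / (1 - z / ((‖a‖ ^ 2 / a.re : ℝ) : ℂ))) ^ 2
    + (((‖a‖ ^ 2 / a.im : ℝ) : ℂ)) ^ 2)

/-- The arc `γ_a` from `0` to `a` of the circle through `0` and `a` centered on `ℝ`
(a vertical segment when `Re a = 0`); it is parametrized as the preimage of the
segment `[0, ic]` under the Möbius map `z ↦ z/(1−z/b)`. -/
def geoArc (a : ℂ) : Set ℂ :=
  (fun t : ℝ =>
      if a.re = 0 then (t : ℂ) * (Complex.I * ((‖a‖ ^ 2 / a.im : ℝ) : ℂ))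
      else ((t : ℂ) * (Complex.I * ((‖a‖ ^ 2 / a.im : ℝ) : ℂ))) /
        (1 + ((t : ℂ) * (Complex.I * ((‖a‖ ^ 2 / a.im : ℝ) : ℂ))) /
          ((‖a‖ ^ 2 / a.re : ℝ) : ℂ))) '' Set.Icc (0 : ℝ) 1

/-! `geoMap a` factors as the Möbius map `z ↦ z/(1 - z/b)`, which preserves `ℍ` and carries `γ_a`
onto the segment `[0, ic]`, followed by `w ↦ w² + c²`, which maps `ℍ ∖ [0, ic]` onto
`ℂ ∖ [0, ∞)`, followed by the square-root branch, inverse to squaring between `ℂ ∖ [0, ∞)`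
and `ℍ`. Each factor has an explicit inverse on the relevant sets, so each is a holomorphic
bijection, and `a ↦ ic ↦ -c² + c² = 0 ↦ 0`. -/

-- In this order `0 ≤ z` means `z ∈ [0, ∞)`.
open scoped ComplexOrder

lemma ConfBijOn.of_bijOn {f : ℂ → ℂ} {U V : Set ℂ} (hd : DifferentiableOn ℂ f U)
    (hb : BijOn f U V) : ConfBijOn f U V :=
  ⟨hd, hb.injOn, hb.image_eq⟩

lemma ConfBijOn.bijOn {f : ℂ → ℂ} {U V : Set ℂ} (h : ConfBijOn f U V) : BijOn f U V :=
  h.2.2 ▸ h.2.1.bijOn_image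

lemma ConfBijOn.comp {f g : ℂ → ℂ} {U V W : Set ℂ} (hg : ConfBijOn g V W)
    (hf : ConfBijOn f U V) : ConfBijOn (g ∘ f) U W :=
  .of_bijOn (hg.1.comp hf.1 hf.bijOn.mapsTo) (hg.bijOn.comp hf.bijOn)

lemma sqrtH_sq (z : ℂ) : sqrtH z ^ 2 = z := by
  rw [sqrtH, mul_pow, one_div, cpow_ofNat_inv_pow, I_sq]
  ring

lemma sqrtH_zero : sqrtH 0 = 0 := by
  simp [sqrtH]

lemma im_sqrtH_nonneg (z : ℂ) : 0 ≤ (sqrtH z).im := by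
  simp only [sqrtH, one_div, mul_im, I_re, I_im, zero_mul, one_mul, zero_add, cpow_inv_two_re]
  exact Real.sqrt_nonneg _

lemma sqrtH_mem_UHP {z : ℂ} (hz : ¬ 0 ≤ z) : sqrtH z ∈ UHP := by
  refine (im_sqrtH_nonneg z).lt_of_ne fun him => hz ?_
  rw [← sqrtH_sq z, le_def, sq, mul_re, mul_im, ← him]
  constructor <;> simp [mul_self_nonneg]

lemma not_sq_nonneg_of_mem_UHP {w : ℂ} (hw : w ∈ UHP) : ¬ 0 ≤ w ^ 2 := by
  have hw : 0 < w.im := hw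
  rw [le_def, sq, mul_re, mul_im]
  rintro ⟨hre, him⟩
  rw [zero_im] at him
  have : w.re = 0 := by nlinarith
  simp only [zero_re, this, mul_zero, zero_sub] at hre
  nlinarith

lemma sqrtH_sq_of_mem_UHP {w : ℂ} (hw : w ∈ UHP) : sqrtH (w ^ 2) = w := by
  have hw : 0 < w.im := hw
  rcases sq_eq_sq_iff_eq_or_eq_neg.mp (sqrtH_sq (w ^ 2)) with h | h
  · exact h
  · have := im_sqrtH_nonneg (w ^ 2)
    rw [h, neg_im] at this
    linarith

lemma differentiableAt_sqrtH {z : ℂ} (hz : ¬ 0 ≤ z) : DifferentiableAt ℂ sqrtH z :=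
  (differentiableAt_const I).mul <| differentiableAt_id.neg.cpow (differentiableAt_const _)
    (by rwa [Pi.neg_apply, id, mem_slitPlane_iff_not_le_zero, neg_nonpos])

lemma confBijOn_sqrtH : ConfBijOn sqrtH (Ici 0)ᶜ UHP :=
  .of_bijOn (fun _ hz => (differentiableAt_sqrtH hz).differentiableWithinAt) <|
    InvOn.bijOn (f' := (· ^ 2)) ⟨fun z _ => sqrtH_sq z, fun _ hw => sqrtH_sq_of_mem_UHP hw⟩
      (fun _ hz => sqrtH_mem_UHP hz) fun _ hw => not_sq_nonneg_of_mem_UHP hw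

def imSegment (c : ℝ) : Set ℂ := (fun t : ℝ => (t : ℂ) * (I * c)) '' Icc 0 1

lemma mem_imSegment_iff {c : ℝ} (hc : 0 < c) {w : ℂ} :
    w ∈ imSegment c ↔ w.re = 0 ∧ 0 ≤ w.im ∧ w.im ≤ c := by
  constructor
  · rintro ⟨t, ⟨ht0, ht1⟩, rfl⟩
    simp only [mul_re, mul_im, ofReal_re, ofReal_im, I_re, I_im]
    refine ⟨by ring, by nlinarith, by nlinarith⟩
  · rintro ⟨hre, him0, himc⟩
    refine ⟨w.im / c, ⟨by positivity, (div_le_one hc).mpr himc⟩, ?_⟩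
    apply Complex.ext <;> simp [hre]
    field_simp

lemma sq_add_sq_nonneg_iff {c : ℝ} (hc : 0 < c) {w : ℂ} (hw : w ∈ UHP) :
    0 ≤ w ^ 2 + (c : ℂ) ^ 2 ↔ w ∈ imSegment c := by
  have hw : 0 < w.im := hw
  rw [mem_imSegment_iff hc, le_def]
  simp only [zero_re, zero_im, add_re, add_im, sq, mul_re, mul_im, ofReal_re, ofReal_im]
  constructor
  · rintro ⟨hre, him⟩
    have hre0 : w.re = 0 := by nlinarith
    refine ⟨hre0, hw.le, ?_⟩
    rw [hre0] at hre
    nlinarith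
  · rintro ⟨hre0, -, himc⟩
    rw [hre0]
    constructor <;> nlinarith

lemma confBijOn_sq_add_sq {c : ℝ} (hc : 0 < c) :
    ConfBijOn (fun w => w ^ 2 + (c : ℂ) ^ 2) (UHP \ imSegment c) (Ici 0)ᶜ := by
  have hc2 : (0 : ℂ) ≤ (c : ℂ) ^ 2 := by
    rw [← ofReal_pow]
    exact zero_le_real.mpr (sq_nonneg c)
  refine .of_bijOn (by fun_prop) <|
    InvOn.bijOn (f' := fun ζ => sqrtH (ζ - (c : ℂ) ^ 2)) ⟨?_, ?_⟩ ?_ ?_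
  · intro w hw
    simp only [add_sub_cancel_right, sqrtH_sq_of_mem_UHP hw.1]
  · intro ζ _
    simp only [sqrtH_sq, sub_add_cancel]
  · intro w ⟨hw, hwL⟩
    exact mt (sq_add_sq_nonneg_iff hc hw).mp hwL
  · intro ζ (hζ : ¬ 0 ≤ ζ)
    have hmem : sqrtH (ζ - (c : ℂ) ^ 2) ∈ UHP :=
      sqrtH_mem_UHP fun h => hζ (by simpa using add_nonneg h hc2)
    refine ⟨hmem, fun hL => hζ ?_⟩
    simpa [sqrtH_sq] using (sq_add_sq_nonneg_iff hc hmem).mpr hL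

def mobius (b : ℝ) (z : ℂ) : ℂ := z / (1 - z / b)

lemma mobius_zero (z : ℂ) : mobius 0 z = z := by
  simp [mobius]

lemma im_mobius (b : ℝ) (z : ℂ) : (mobius b z).im = z.im / normSq (1 - z / b) := by
  have hre : (1 - z / b).re = 1 - z.re / b := by simp
  have him : (1 - z / b).im = -(z.im / b) := by simp
  rw [mobius, div_im, hre, him]
  ring

lemma one_sub_div_ofReal_ne_zero_of_im_ne_zero {z : ℂ} (hz : z.im ≠ 0) (b : ℝ) :
    1 - z / b ≠ 0 := by
  rcases eq_or_ne b 0 with rfl | hb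
  · simp
  intro h
  apply_fun im at h
  simp [hb, hz] at h

lemma one_sub_div_ofReal_ne_zero_of_re_eq_zero {z : ℂ} (hz : z.re = 0) (b : ℝ) :
    1 - z / b ≠ 0 := by
  intro h
  apply_fun re at h
  simp [hz] at h

lemma mobius_mem_UHP (b : ℝ) {z : ℂ} (hz : z ∈ UHP) : mobius b z ∈ UHP := by
  have hz : 0 < z.im := hz
  show 0 < (mobius b z).im
  rw [im_mobius]
  exact div_pos hz (normSq_pos.mpr (one_sub_div_ofReal_ne_zero_of_im_ne_zero hz.ne' b))

lemma differentiableAt_mobius {b : ℝ} {z : ℂ} (hz : 1 - z / b ≠ 0) :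
    DifferentiableAt ℂ (mobius b) z :=
  differentiableAt_id.div (by fun_prop) hz

lemma mobius_neg_mobius {b : ℝ} {z : ℂ} (hz : 1 - z / b ≠ 0) : mobius (-b) (mobius b z) = z := by
  rcases eq_or_ne b 0 with rfl | hb
  · simp [mobius_zero]
  have hb : (b : ℂ) ≠ 0 := ofReal_ne_zero.mpr hb
  simp only [mobius, ofReal_neg]
  rw [one_sub_div hb] at hz ⊢
  have hz' : (b : ℂ) - z ≠ 0 := by simpa [hb] using hz
  field_simp
  rw [sub_neg_eq_add, sub_add_cancel, mul_div_cancel_right₀ _ hb]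

lemma confBijOn_mobius (b : ℝ) {S : Set ℂ} (hS : ∀ s ∈ S, s.re = 0) :
    ConfBijOn (mobius b) (UHP \ mobius (-b) '' S) (UHP \ S) := by
  have hden {z : ℂ} (hz : z ∈ UHP) (b' : ℝ) : 1 - z / b' ≠ 0 :=
    one_sub_div_ofReal_ne_zero_of_im_ne_zero (ne_of_gt hz) b'
  have mobius_mobius_neg {w : ℂ} (hw : 1 - w / ((-b : ℝ) : ℂ) ≠ 0) :
      mobius b (mobius (-b) w) = w := by
    simpa using mobius_neg_mobius hw
  refine .of_bijOn ?_ (InvOn.bijOn (f' := mobius (-b)) ⟨?_, ?_⟩ ?_ ?_)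
  · exact fun z hz => (differentiableAt_mobius (hden hz.1 b)).differentiableWithinAt
  · exact fun z hz => mobius_neg_mobius (hden hz.1 b)
  · exact fun w hw => mobius_mobius_neg (hden hw.1 _)
  · intro z ⟨hz, hzS⟩
    exact ⟨mobius_mem_UHP b hz, fun hS' => hzS ⟨_, hS', mobius_neg_mobius (hden hz b)⟩⟩
  · rintro w ⟨hw, hwS⟩
    refine ⟨mobius_mem_UHP _ hw, fun ⟨s, hs, hsw⟩ => hwS ?_⟩
    rwa [← mobius_mobius_neg (hden hw _), ← hsw,
      mobius_mobius_neg (one_sub_div_ofReal_ne_zero_of_re_eq_zero (hS s hs) _)]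

lemma re_eq_zero_of_mem_imSegment {c : ℝ} {w : ℂ} (hw : w ∈ imSegment c) : w.re = 0 := by
  obtain ⟨t, -, rfl⟩ := hw
  simp

lemma mobius_self {a : ℂ} (ha : a ∈ UHP) :
    mobius (‖a‖ ^ 2 / a.re) a = I * ((‖a‖ ^ 2 / a.im : ℝ) : ℂ) := by
  have him : a.im ≠ 0 := ne_of_gt ha
  have hnorm : ‖a‖ ^ 2 = a.re ^ 2 + a.im ^ 2 := by rw [Complex.sq_norm, normSq_apply]; ring
  rcases eq_or_ne a.re 0 with hre | hre
  · rw [hre, div_zero, mobius_zero]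
    apply Complex.ext <;> simp only [mul_re, mul_im, I_re, I_im, ofReal_re, ofReal_im, hnorm, hre]
    · ring
    · field_simp; ring
  · rw [mobius, div_eq_iff (one_sub_div_ofReal_ne_zero_of_im_ne_zero him _)]
    apply Complex.ext <;>
      simp only [mul_re, mul_im, sub_re, sub_im, one_re, one_im, div_ofReal_re, div_ofReal_im,
        I_re, I_im, ofReal_re, ofReal_im, hnorm] <;>
      field_simp <;> ring

-- When `a.re = 0`, Lean's `‖a‖ ^ 2 / a.re` is `0` and `z / (1 - z / 0) = z`, so the
-- `if` branches of `geoMap` and `geoArc` are the same Möbius formula with `b = 0`.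
lemma geoMap_eq_comp (a : ℂ) :
    geoMap a = sqrtH ∘ (fun w => w ^ 2 + ((‖a‖ ^ 2 / a.im : ℝ) : ℂ) ^ 2) ∘
      mobius (‖a‖ ^ 2 / a.re) := by
  ext z
  simp only [geoMap, mobius, Function.comp]
  split_ifs with hre <;> simp [hre]

lemma geoArc_eq_image (a : ℂ) :
    geoArc a = mobius (-(‖a‖ ^ 2 / a.re)) '' imSegment (‖a‖ ^ 2 / a.im) := by
  rw [geoArc, imSegment, image_image]
  refine image_congr fun t _ => ?_
  split_ifs with hre <;> simp [mobius, hre, sub_eq_add_neg, div_neg]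

/-- The basic map `f_a` is a conformal bijection of `ℍ ∖ γ_a` onto `ℍ` with `f_a(a) = 0`. -/
theorem geoMap_conformal_bijection (a : ℂ) (ha : a ∈ UHP) :
    ConfBijOn (geoMap a) (UHP \ geoArc a) UHP ∧ geoMap a a = 0 := by
  have hc : 0 < ‖a‖ ^ 2 / a.im :=
    div_pos (pow_pos (norm_pos_iff.mpr fun h => by simp [h, UHP] at ha) 2) ha
  rw [geoMap_eq_comp, geoArc_eq_image]
  refine ⟨confBijOn_sqrtH.comp <| (confBijOn_sq_add_sq hc).comp <|
    confBijOn_mobius _ fun _ => re_eq_zero_of_mem_imSegment, ?_⟩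
  simp only [Function.comp, mobius_self ha, mul_pow, I_sq, neg_one_mul, neg_add_cancel, sqrtH_zero]
end
end
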